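/- arXiv:2110.11379 — 4 statements merged into one kernel-verified Lean document; each statement's English description precedes it below -/
import Mathlib

section
/- Let G be a group, a ∈ G, and suppose |a|_k ≤ n, i.e. the set X_k(a) of commutators [a,x_1,...,x_k] has at most n elements. Then for every d ∈ X_k(a) the index [G : C_G(d)] is at most n². -/
/-- Left-normed commutator `[a,b] = a⁻¹ b⁻¹ a b`. -/
def cmt {G : Type*} [Group G] (a b : G) : G := a⁻¹ * b⁻¹ * a * b

/-- Iterated left-normed commutator `[a, x₁, ..., x_k]`. -/
def itCmt {G : Type*} [Group G] (a : G) (l : List G) : G := l.foldl cmt a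

/-- `Xset a k` is the set of commutators `[a, x₁, ..., x_k]` with `xᵢ ∈ G`. -/
def Xset {G : Type*} [Group G] (a : G) (k : ℕ) : Set G :=
  {b | ∃ l : List G, l.length = k ∧ itCmt a l = b}

/-!
Write `d = [b, x]` with `b ∈ X_{k-1}(a)`; then every `[b, y]` lies in `X_k(a)`. The identity
`g [b, x] g⁻¹ = [b, g⁻¹]⁻¹ [b, x g⁻¹]` shows that every conjugate of `d` is a quotient `u⁻¹ v` of
two elements of `X_k(a)`, so the conjugacy class of `d`, whose size is `[G : C_G(d)]`, has at
most `n²` elements.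
-/

open MulAction

section

variable {G : Type*} [Group G]

theorem Subgroup.index_centralizer_singleton_eq_ncard_orbit (g : G) :
    (Subgroup.centralizer {g}).index = (orbit (ConjAct G) g).ncard := by
  rw [Subgroup.centralizer_eq_comap_stabilizer, ← index_stabilizer]
  exact Subgroup.index_comap_of_surjective _ ConjAct.toConjAct.surjective

theorem conj_cmt_eq_inv_cmt_mul_cmt (b x g : G) :
    g * cmt b x * g⁻¹ = (cmt b g⁻¹)⁻¹ * cmt b (x * g⁻¹) := by
  simp only [cmt]; group

theorem index_centralizer_cmt_le {S : Set G} (hS : S.Finite) {b : G} (hbS : ∀ y, cmt b y ∈ S)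
    (x : G) : (Subgroup.centralizer {cmt b x}).index ≤ S.ncard ^ 2 := by
  have horbit : orbit (ConjAct G) (cmt b x) ⊆ (fun p : G × G ↦ p.1⁻¹ * p.2) '' S ×ˢ S := by
    rintro _ ⟨g, rfl⟩
    exact ⟨(cmt b (ConjAct.ofConjAct g)⁻¹, cmt b (x * (ConjAct.ofConjAct g)⁻¹)),
      ⟨hbS _, hbS _⟩, (conj_cmt_eq_inv_cmt_mul_cmt b x _).symm⟩
  have hSS : (S ×ˢ S).Finite := hS.prod hS
  calc (Subgroup.centralizer {cmt b x}).index
      = (orbit (ConjAct G) (cmt b x)).ncard :=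
        Subgroup.index_centralizer_singleton_eq_ncard_orbit _
    _ ≤ ((fun p : G × G ↦ p.1⁻¹ * p.2) '' S ×ˢ S).ncard :=
        Set.ncard_le_ncard horbit (hSS.image _)
    _ ≤ (S ×ˢ S).ncard := Set.ncard_image_le hSS
    _ = S.ncard ^ 2 := by rw [Set.ncard_prod, sq]

theorem itCmt_append_singleton (a x : G) (l : List G) :
    itCmt a (l ++ [x]) = cmt (itCmt a l) x := by
  simp only [itCmt, List.foldl_append, List.foldl_cons, List.foldl_nil]

theorem mem_Xset_succ_iff {a d : G} {k : ℕ} :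
    d ∈ Xset a (k + 1) ↔ ∃ b ∈ Xset a k, ∃ x, cmt b x = d := by
  constructor
  · rintro ⟨l, hlen, rfl⟩
    obtain rfl | ⟨l, x, rfl⟩ := l.eq_nil_or_concat
    · simp at hlen
    · refine ⟨itCmt a l, ⟨l, by simpa using hlen, rfl⟩, x, ?_⟩
      rw [List.concat_eq_append, itCmt_append_singleton]
  · rintro ⟨_, ⟨l, rfl, rfl⟩, x, rfl⟩
    exact ⟨l ++ [x], by simp, itCmt_append_singleton a x l⟩

end

theorem stmt_1 {G : Type*} [Group G] (a : G) (k n : ℕ) (hk : 1 ≤ k)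
    (hn : (Xset a k).encard ≤ n) :
    ∀ d ∈ Xset a k, (Subgroup.centralizer {d} : Subgroup G).index ≤ n ^ 2 := by
  obtain ⟨j, rfl⟩ := Nat.exists_eq_add_of_le' hk
  rintro d hd
  obtain ⟨b, hb, x, rfl⟩ := mem_Xset_succ_iff.mp hd
  have hfin : (Xset a (j + 1)).Finite := Set.finite_of_encard_le_coe hn
  have hcard : (Xset a (j + 1)).ncard ≤ n := by
    rw [← hfin.cast_ncard_eq] at hn; exact_mod_cast hn
  calc (Subgroup.centralizer {cmt b x}).index ≤ (Xset a (j + 1)).ncard ^ 2 :=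
        index_centralizer_cmt_le hfin (fun y ↦ mem_Xset_succ_iff.mpr ⟨b, hb, y, rfl⟩) x
    _ ≤ n ^ 2 := Nat.pow_le_pow_left hcard 2
end

section
/- Let A be a finite group acting on a finite group G with gcd(|A|,|G|) = 1. Then [[G,A],A] = [G,A], where [G,A] denotes the subgroup of G generated by elements g⁻¹·(g·a) for g ∈ G, a ∈ A (in the semidirect product). -/
/-!
Put `K = [G, A]` and `N = [K, A]`. Since `K` is `A`-invariant, `N ≤ K`; and `N` is normal in `K`
with `A` acting trivially on `K / N`. For `g ∈ G` the cocycle identity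
`g⁻¹ (ab • g) = (g⁻¹ (a • g)) · a • (g⁻¹ (b • g))` then makes `a ↦ g⁻¹ (a • g) N` a homomorphism
`A → K / N`, which is trivial because `|K / N|` divides `|G|`, coprime to `|A|`. Hence every
generator of `K` lies in `N`.
-/

/-- For a group `A` acting on a group `G` by automorphisms and a subgroup `H ≤ G`,
`actComm A H` is the subgroup `[H, A]` of `G` generated by all `h⁻¹ * (a • h)`. -/
def actComm (A : Type*) {G : Type*} [Group A] [Group G] [MulDistribMulAction A G]
    (H : Subgroup G) : Subgroup G :=
  Subgroup.closure {x : G | ∃ h ∈ H, ∃ a : A, x = h⁻¹ * a • h}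

theorem MonoidHom.eq_one_of_coprime_card {M N : Type*} [Group M] [Group N] (f : M →* N)
    (h : Nat.Coprime (Nat.card M) (Nat.card N)) (x : M) : f x = 1 :=
  orderOf_eq_one_iff.mp <| Nat.eq_one_of_dvd_coprimes h
    ((orderOf_map_dvd f x).trans (orderOf_dvd_natCard x)) (orderOf_dvd_natCard (f x))

section ActComm

variable {A G : Type*} [Group A] [Group G] [MulDistribMulAction A G] {H : Subgroup G}

theorem inv_mul_smul_mem_actComm {h : G} (hh : h ∈ H) (a : A) : h⁻¹ * a • h ∈ actComm A H :=
  Subgroup.subset_closure ⟨h, hh, a, rfl⟩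

theorem smul_mem_actComm (hH : ∀ (a : A), ∀ h ∈ H, a • h ∈ H) (a : A) {x : G}
    (hx : x ∈ actComm A H) : a • x ∈ actComm A H := by
  suffices actComm A H ≤ (actComm A H).comap (MulDistribMulAction.toMonoidHom G a) from this hx
  refine (Subgroup.closure_le _).2 ?_
  rintro _ ⟨h, hh, b, rfl⟩
  have hconj : a • (h⁻¹ * b • h) = (a • h)⁻¹ * (a * b * a⁻¹) • (a • h) := by
    rw [smul_mul', smul_inv', mul_smul, mul_smul, inv_smul_smul, ← mul_smul]
  simpa [hconj] using inv_mul_smul_mem_actComm (hH a h hh) (a * b * a⁻¹)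

theorem actComm_le (hH : ∀ (a : A), ∀ h ∈ H, a • h ∈ H) : actComm A H ≤ H := by
  refine (Subgroup.closure_le _).2 ?_
  rintro _ ⟨h, hh, a, rfl⟩
  exact H.mul_mem (H.inv_mem hh) (hH a h hh)

theorem conj_mem_actComm {k x : G} (hk : k ∈ H) (hx : x ∈ actComm A H) :
    k⁻¹ * x * k ∈ actComm A H := by
  suffices actComm A H ≤ (actComm A H).comap (MulAut.conj k⁻¹).toMonoidHom by
    simpa using this hx
  refine (Subgroup.closure_le _).2 ?_
  rintro _ ⟨m, hm, a, rfl⟩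
  have hconj : k⁻¹ * (m⁻¹ * a • m) * k = ((m * k)⁻¹ * a • (m * k)) * (k⁻¹ * a • k)⁻¹ := by
    rw [smul_mul']
    group
  simpa [hconj] using (actComm A H).mul_mem (inv_mul_smul_mem_actComm (H.mul_mem hm hk) a)
    ((actComm A H).inv_mem (inv_mul_smul_mem_actComm hk a))

instance actComm_subgroupOf_normal (H : Subgroup G) : ((actComm A H).subgroupOf H).Normal where
  conj_mem n hn k := by
    simpa [Subgroup.mem_subgroupOf] using conj_mem_actComm (H.inv_mem k.2) hn

def cocycleMod {g : G} (hg : ∀ a : A, g⁻¹ * a • g ∈ H) :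
    A →* H ⧸ (actComm A H).subgroupOf H where
  toFun a := QuotientGroup.mk ⟨g⁻¹ * a • g, hg a⟩
  map_one' := by
    rw [QuotientGroup.eq_one_iff, Subgroup.mem_subgroupOf]
    simp
  map_mul' a b := by
    rw [← QuotientGroup.mk_mul, QuotientGroup.eq, Subgroup.mem_subgroupOf]
    have hcocycle : g⁻¹ * (a * b) • g = (g⁻¹ * a • g) * a • (g⁻¹ * b • g) := by
      rw [smul_mul', smul_inv', mul_smul]
      group
    simpa [hcocycle, mul_assoc] using (actComm A H).inv_mem (inv_mul_smul_mem_actComm (hg b) a)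

theorem cocycleMod_apply {g : G} (hg : ∀ a : A, g⁻¹ * a • g ∈ H) (a : A) :
    cocycleMod hg a = QuotientGroup.mk ⟨g⁻¹ * a • g, hg a⟩ :=
  rfl

end ActComm

theorem stmt_3_general (A G : Type*) [Group A] [Group G] [MulDistribMulAction A G]
    (hcop : Nat.Coprime (Nat.card A) (Nat.card G)) :
    actComm A (actComm A (⊤ : Subgroup G)) = actComm A (⊤ : Subgroup G) := by
  have hG : ∀ (a : A), ∀ g ∈ (⊤ : Subgroup G), a • g ∈ (⊤ : Subgroup G) :=
    fun _ _ _ => Subgroup.mem_top _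
  refine le_antisymm (actComm_le (smul_mem_actComm hG)) ((Subgroup.closure_le _).2 ?_)
  rintro _ ⟨g, -, a, rfl⟩
  set K := actComm A (⊤ : Subgroup G)
  have hg : ∀ b : A, g⁻¹ * b • g ∈ K := fun b => inv_mul_smul_mem_actComm (Subgroup.mem_top g) b
  have hcop' : Nat.Coprime (Nat.card A) (Nat.card (K ⧸ (actComm A K).subgroupOf K)) :=
    hcop.coprime_dvd_right
      ((Subgroup.card_quotient_dvd_card _).trans (Subgroup.card_subgroup_dvd_card K))
  have htriv := (cocycleMod hg).eq_one_of_coprime_card hcop' a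
  rwa [cocycleMod_apply, QuotientGroup.eq_one_iff, Subgroup.mem_subgroupOf] at htriv

theorem stmt_3 (A G : Type*) [Group A] [Group G] [MulDistribMulAction A G]
    [Finite A] [Finite G] (hcop : Nat.Coprime (Nat.card A) (Nat.card G)) :
    actComm A (actComm A (⊤ : Subgroup G)) = actComm A (⊤ : Subgroup G) :=
  stmt_3_general A G hcop
end

section
/- Let G be a metabelian group and let a, b ∈ G be left l-Engel elements. Then every element x of the subgroup generated by a and b is a left (2l+1)-Engel element. -/
/-! Conjugation makes the abelian group `G'` a right `G`-module, and since commutators act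
trivially on `G'`, the endomorphisms by which `G` acts commute and generate a commutative ring.
There `d g := conjHom g - 1` acts as `c ↦ [c, g]`, so the Engel conditions read
`d a ^ l = d b ^ l = 0`. As `conjHom` is multiplicative, `d x` lies in the ideal `(d a, d b)` for
every `x ∈ ⟨a, b⟩`, whence `d x ^ (2l) = 0`; applied to `[y, x] ∈ G'` this is `[y, x, …, x] = 1`
with `2l + 1` copies of `x`. -/

open scoped IsMulCommutative commutatorElement

section General

variable {G : Type*} [Group G]

def IsLeftEngel (g : G) (n : ℕ) : Prop :=
  ∀ x : G, itCmt x (List.replicate n g) = 1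

lemma cmt_mem_commutator (x g : G) : cmt x g ∈ commutator G := by
  rw [show cmt x g = ⁅x⁻¹, g⁻¹⁆ by simp [cmt, commutatorElement_def]]
  exact Subgroup.commutator_mem_commutator (Subgroup.mem_top _) (Subgroup.mem_top _)

lemma itCmt_replicate_succ (y x : G) (n : ℕ) :
    itCmt y (List.replicate (n + 1) x) = itCmt (cmt y x) (List.replicate n x) := rfl

lemma sub_one_mem_span_image_of_mem_closure {R : Type*} [CommRing R] (κ : G →* R) {s : Set G}
    {x : G} (hx : x ∈ Subgroup.closure s) :
    κ x - 1 ∈ Ideal.span ((fun g ↦ κ g - 1) '' s) := by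
  set I := Ideal.span ((fun g ↦ κ g - 1) '' s)
  have mem_ker : ∀ g, g ∈ ((Ideal.Quotient.mk I).toMonoidHom.comp κ).ker ↔ κ g - 1 ∈ I :=
    fun g ↦ by
      rw [MonoidHom.mem_ker, MonoidHom.comp_apply, RingHom.toMonoidHom_eq_coe,
        MonoidHom.coe_coe, ← map_one (Ideal.Quotient.mk I), Ideal.Quotient.eq]
  refine (mem_ker x).mp (Subgroup.closure_le _ |>.mpr (fun g hg ↦ ?_) hx)
  exact (mem_ker g).mpr (Ideal.subset_span ⟨g, hg, rfl⟩)

lemma pow_two_mul_eq_zero_of_mem_span_pair {R : Type*} [CommRing R] {u v z : R} {l : ℕ}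
    (hu : u ^ l = 0) (hv : v ^ l = 0) (hz : z ∈ Ideal.span {u, v}) : z ^ (2 * l) = 0 := by
  obtain ⟨s, t, rfl⟩ := Ideal.mem_span_pair.mp hz
  refine (Commute.all _ _).add_pow_eq_zero_of_add_le_succ_of_pow_eq_zero (m := l) (n := l)
    ?_ ?_ (by omega)
  · rw [mul_pow, hu, mul_zero]
  · rw [mul_pow, hv, mul_zero]

end General

section Conjugation

variable {G : Type*} [Group G]

def rightConj (g : G) : AddMonoid.End (Additive (commutator G)) :=
  MonoidHom.toAdditive (MulAut.conjNormal g⁻¹ : MulAut (commutator G)).toMonoidHom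

lemma rightConj_apply (g : G) (c : Additive (commutator G)) :
    ((rightConj g c).toMul : G) = g⁻¹ * (c.toMul : G) * g :=
  (MulAut.conjNormal_apply g⁻¹ c.toMul).trans (by rw [inv_inv])

lemma ext_additive_subgroup {H : Subgroup G} {f f' : AddMonoid.End (Additive H)}
    (h : ∀ c, ((f c).toMul : G) = (f' c).toMul) : f = f' :=
  AddMonoidHom.ext fun c ↦ Additive.toMul.injective (Subtype.ext (h c))

lemma rightConj_mul (g h : G) : rightConj (g * h) = rightConj h * rightConj g :=
  ext_additive_subgroup fun c ↦ by
    simp only [AddMonoid.End.coe_mul, Function.comp_apply, rightConj_apply]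
    group

end Conjugation

section Metabelian

variable {G : Type*} [Group G] [IsMulCommutative (commutator G)]

lemma rightConj_eq_one_of_mem {k : G} (hk : k ∈ commutator G) : rightConj k = 1 :=
  ext_additive_subgroup fun c ↦ by
    have hkc : k * (c.toMul : G) = c.toMul * k :=
      congrArg Subtype.val (mul_comm (⟨k, hk⟩ : commutator G) c.toMul)
    rw [rightConj_apply, AddMonoid.End.one_apply, mul_assoc, ← hkc, inv_mul_cancel_left]

lemma commute_rightConj (g h : G) : Commute (rightConj g) (rightConj h) := by
  have hgh : h * g = g * h * cmt h g := by
    simp only [cmt]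
    group
  calc rightConj g * rightConj h = rightConj (h * g) := (rightConj_mul h g).symm
    _ = rightConj (cmt h g) * rightConj (g * h) := by rw [hgh, rightConj_mul]
    _ = rightConj h * rightConj g := by
      rw [rightConj_eq_one_of_mem (cmt_mem_commutator h g), one_mul, rightConj_mul]

lemma rightConj_sub_one_apply (g : G) (c : Additive (commutator G)) :
    (((rightConj g - 1) c).toMul : G) = cmt (c.toMul : G) g := by
  change ((rightConj g c - c).toMul : G) = _
  rw [toMul_sub, div_eq_inv_mul, Subgroup.coe_mul, Subgroup.coe_inv, rightConj_apply, cmt]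
  group

lemma rightConj_sub_one_pow_apply (g : G) (n : ℕ) (c : Additive (commutator G)) :
    ((((rightConj g - 1) ^ n) c).toMul : G) = itCmt (c.toMul : G) (List.replicate n g) := by
  induction n generalizing c with
  | zero => rfl
  | succ n ih =>
    rw [pow_succ, AddMonoid.End.coe_mul, Function.comp_apply, ih, itCmt_replicate_succ,
      rightConj_sub_one_apply]

variable (G) in
abbrev conjRing : Subring (AddMonoid.End (Additive (commutator G))) :=
  Subring.closure (Set.range rightConj)

instance : IsMulCommutative (conjRing G) :=
  Subring.isMulCommutative_closure <| by
    rintro _ ⟨g, rfl⟩ _ ⟨h, rfl⟩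
    exact commute_rightConj g h

def conjHom : G →* conjRing G where
  toFun g := ⟨rightConj g, Subring.subset_closure ⟨g, rfl⟩⟩
  map_one' := Subtype.ext (rightConj_eq_one_of_mem (one_mem _))
  map_mul' g h := by
    rw [mul_comm]
    exact Subtype.ext (rightConj_mul g h)

lemma conjHom_sub_one_pow_apply (g : G) (n : ℕ) (c : Additive (commutator G)) :
    (((((conjHom g - 1) ^ n : conjRing G) : AddMonoid.End _) c).toMul : G) =
      itCmt (c.toMul : G) (List.replicate n g) := by
  rw [Subring.coe_pow, AddSubgroupClass.coe_sub, OneMemClass.coe_one]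
  exact rightConj_sub_one_pow_apply g n c

lemma IsLeftEngel.conjHom_sub_one_pow_eq_zero {g : G} {n : ℕ} (hg : IsLeftEngel g n) :
    (conjHom g - 1) ^ n = 0 :=
  Subtype.ext <| ext_additive_subgroup fun c ↦ (conjHom_sub_one_pow_apply g n c).trans (hg _)

lemma isLeftEngel_succ_of_conjHom_sub_one_pow_eq_zero {g : G} {n : ℕ}
    (h : (conjHom g - 1) ^ n = 0) : IsLeftEngel g (n + 1) := fun y ↦ by
  have := conjHom_sub_one_pow_apply g n (.ofMul ⟨cmt y g, cmt_mem_commutator y g⟩)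
  rw [h] at this
  exact this.symm

end Metabelian

theorem stmt_4 {G : Type*} [Group G]
    (hmeta : ∀ x ∈ commutator G, ∀ y ∈ commutator G, x * y = y * x)
    (l : ℕ) (a b : G)
    (ha : ∀ x : G, itCmt x (List.replicate l a) = 1)
    (hb : ∀ x : G, itCmt x (List.replicate l b) = 1) :
    ∀ x ∈ Subgroup.closure ({a, b} : Set G), ∀ y : G,
      itCmt y (List.replicate (2 * l + 1) x) = 1 := by
  have : IsMulCommutative (commutator G) :=
    ⟨⟨fun x y ↦ Subtype.ext (hmeta x.1 x.2 y.1 y.2)⟩⟩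
  intro x hx
  have hspan := sub_one_mem_span_image_of_mem_closure conjHom hx
  rw [Set.image_pair] at hspan
  exact isLeftEngel_succ_of_conjHom_sub_one_pow_eq_zero <|
    pow_two_mul_eq_zero_of_mem_span_pair (IsLeftEngel.conjHom_sub_one_pow_eq_zero ha)
      (IsLeftEngel.conjHom_sub_one_pow_eq_zero hb) hspan
end

section
/- Let G be a group generated by a set S, and let k ≥ 1. Then γ_{k+1}(G), the (k+1)-st term of the lower central series, is generated by the set of all conjugates of elements of X_k(g) for g ∈ S, i.e. γ_{k+1}(G) equals the normal closure in G of ⋃_{g∈S} X_k(g). -/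
/-!
Let `N` be the normal closure of the commutators `[g, x₁, …, x_k]` with `g ∈ S`. One inclusion is
clear, since `[g, x₁, …, x_k] ∈ γ_{k+1}(G)` for every `g`. Conversely, in `G ⧸ N` every
`[ḡ, x₁, …, x_k]` is trivial, which by induction on `k` puts `ḡ` into the `k`-th term of the upper
central series; as these terms are subgroups and `S` generates, the whole of `G ⧸ N` lies there.
So `G ⧸ N` is nilpotent of class at most `k`, and `γ_{k+1}(G)` (Mathlib's `lowerCentralSeries k`,
indexed from `0`) maps to `1` in it.
-/

open Subgroup
open scoped commutatorElement

section IteratedCommutator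

variable {G : Type*} [Group G]

lemma cmt_eq_commutatorElement (a b : G) : cmt a b = ⁅a⁻¹, b⁻¹⁆ := by
  simp [cmt, commutatorElement_def]

lemma itCmt_cons (a y : G) (l : List G) : itCmt a (y :: l) = itCmt (cmt a y) l := rfl

lemma map_itCmt {H : Type*} [Group H] (f : G →* H) (a : G) (l : List G) :
    f (itCmt a l) = itCmt (f a) (l.map f) := by
  induction l generalizing a with
  | nil => rfl
  | cons y l ih => simp [itCmt_cons, ih, cmt]

lemma itCmt_mem_lowerCentralSeries {a : G} {n : ℕ}
    (ha : a ∈ (⊤ : Subgroup G).lowerCentralSeries n) (l : List G) :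
    itCmt a l ∈ (⊤ : Subgroup G).lowerCentralSeries (n + l.length) := by
  induction l generalizing a n with
  | nil => exact ha
  | cons y l ih =>
    have hay : cmt a y ∈ (⊤ : Subgroup G).lowerCentralSeries (n + 1) := by
      rw [cmt_eq_commutatorElement, Subgroup.lowerCentralSeries_succ]
      exact commutator_mem_commutator (inv_mem ha) (mem_top _)
    rw [itCmt_cons, List.length_cons, ← add_assoc, add_right_comm]
    exact ih hay

lemma Xset_subset_lowerCentralSeries (g : G) (k : ℕ) :
    Xset g k ⊆ (⊤ : Subgroup G).lowerCentralSeries k := by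
  rintro _ ⟨l, rfl, rfl⟩
  simpa using itCmt_mem_lowerCentralSeries (n := 0) (mem_top g) l

lemma mem_upperCentralSeries_add_of_forall_itCmt_mem {x : G} {m j : ℕ}
    (h : ∀ l : List G, l.length = j → itCmt x l ∈ Subgroup.upperCentralSeries G m) :
    x ∈ Subgroup.upperCentralSeries G (m + j) := by
  induction j generalizing x with
  | zero => exact h [] rfl
  | succ j ih =>
    have hcmt (y : G) : cmt x y ∈ Subgroup.upperCentralSeries G (m + j) :=
      ih fun l hl => h (y :: l) (by simp [hl])
    rw [← add_assoc, ← inv_mem_iff, Subgroup.mem_upperCentralSeries_succ_iff]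
    intro y
    simpa [cmt_eq_commutatorElement] using hcmt y⁻¹

end IteratedCommutator

section Quotient

variable {G Q : Type*} [Group G] [Group Q]

lemma upperCentralSeries_eq_top_of_map_itCmt_eq_one {f : G →* Q} (hf : Function.Surjective f)
    {S : Set G} (hS : closure S = ⊤) {k : ℕ}
    (h : ∀ g ∈ S, ∀ l : List G, l.length = k → f (itCmt g l) = 1) :
    Subgroup.upperCentralSeries Q k = ⊤ := by
  have hgen : S ⊆ (Subgroup.upperCentralSeries Q k).comap f := by
    intro g hg
    have hf_itCmt :
        ∀ l : List Q, l.length = k → itCmt (f g) l ∈ Subgroup.upperCentralSeries Q 0 := by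
      intro l hl
      obtain ⟨l', rfl⟩ := List.map_surjective_iff.mpr hf l
      rw [← map_itCmt, Subgroup.upperCentralSeries_zero, mem_bot]
      exact h g hg l' (by simpa using hl)
    simpa using mem_upperCentralSeries_add_of_forall_itCmt_mem hf_itCmt
  rw [← closure_le, hS, top_le_iff, ← comap_top f] at hgen
  exact comap_injective hf hgen

lemma lowerCentralSeries_le_ker_of_upperCentralSeries_eq_top (f : G →* Q) {k : ℕ}
    (h : Subgroup.upperCentralSeries Q k = ⊤) :
    (⊤ : Subgroup G).lowerCentralSeries k ≤ f.ker := by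
  have hQ : (⊤ : Subgroup Q).lowerCentralSeries k = ⊥ :=
    lowerCentralSeries_eq_bot_iff_upperCentralSeries_eq_top.mpr h
  rw [← Subgroup.map_eq_bot_iff, eq_bot_iff, map_lowerCentralSeries, ← hQ]
  exact lowerCentralSeries_mono k le_top

end Quotient

theorem stmt_9_general {G : Type*} [Group G] (S : Set G) (hS : Subgroup.closure S = ⊤)
    (k : ℕ) :
    (⊤ : Subgroup G).lowerCentralSeries k = Subgroup.normalClosure (⋃ g ∈ S, Xset g k) := by
  set N := normalClosure (⋃ g ∈ S, Xset g k)
  refine le_antisymm ?_ <| normalClosure_le_normal <|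
    Set.iUnion₂_subset fun g _ => Xset_subset_lowerCentralSeries g k
  have hN : ∀ g ∈ S, ∀ l : List G, l.length = k → QuotientGroup.mk' N (itCmt g l) = 1 :=
    fun g hg l hl => (QuotientGroup.eq_one_iff _).mpr <|
      subset_normalClosure (Set.mem_biUnion hg ⟨l, hl, rfl⟩)
  simpa using lowerCentralSeries_le_ker_of_upperCentralSeries_eq_top (QuotientGroup.mk' N) <|
    upperCentralSeries_eq_top_of_map_itCmt_eq_one (QuotientGroup.mk'_surjective N) hS hN

theorem stmt_9 {G : Type*} [Group G] (S : Set G) (hS : Subgroup.closure S = ⊤)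
    (k : ℕ) (hk : 1 ≤ k) :
    (⊤ : Subgroup G).lowerCentralSeries k = Subgroup.normalClosure (⋃ g ∈ S, Xset g k) :=
  stmt_9_general S hS k
end
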